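/- For |q| < 1 and |z| < 1, the q-exponential e_q(z) = ∑_{n≥0} z^n/(q;q)_n equals 1/(z;q)_∞, where (z;q)_∞ = ∏_{k≥0}(1 - z q^k). -/

import Mathlib

/-!
Put `F(w) = ∑ wⁿ / (q;q)ₙ`. Comparing coefficients, using `(q;q)ₙ₊₁ = (q;q)ₙ (1 - qⁿ⁺¹)`, gives
the functional equation `F(q w) = (1 - w) F(w)`, and iterating it `F(z) (z;q)_N = F(q^N z)`.
As `N → ∞` the left side tends to `F(z) (z;q)_∞` and the right side to `F(0) = 1`. Convergence of
the series, and its continuity at `0`, come from the bound `1 / |(q;q)ₙ| ≤ C`, which holds because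
`(q;q)ₙ` converges to the nonzero limit `(q;q)_∞`.
-/

open Filter Topology

noncomputable section

/-- The q-Pochhammer symbol (a;q)_m = ∏_{j=0}^{m-1} (1 - a q^j). -/
def qPoch (a q : ℂ) (m : ℕ) : ℂ := ∏ j ∈ Finset.range m, (1 - a * q ^ j)

section BoundedCoefficients

variable {𝕜 : Type*} [NormedField 𝕜] {b : ℕ → 𝕜} {C : ℝ}

lemma norm_pow_div_le (hb : ∀ n, ‖(b n)⁻¹‖ ≤ C) (w : 𝕜) (n : ℕ) :
    ‖w ^ n / b n‖ ≤ C * ‖w‖ ^ n := by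
  rw [div_eq_mul_inv, norm_mul, norm_pow, mul_comm]
  exact mul_le_mul_of_nonneg_right (hb n) (by positivity)

variable [CompleteSpace 𝕜]

lemma summable_pow_div (hb : ∀ n, ‖(b n)⁻¹‖ ≤ C) {w : 𝕜} (hw : ‖w‖ < 1) :
    Summable fun n ↦ w ^ n / b n :=
  .of_norm_bounded ((summable_geometric_of_lt_one (norm_nonneg w) hw).mul_left C)
    (norm_pow_div_le hb w)

lemma tendsto_tsum_pow_div_nhds_zero (hb : ∀ n, ‖(b n)⁻¹‖ ≤ C) :
    Tendsto (fun w : 𝕜 ↦ ∑' n, w ^ n / b n) (𝓝 0) (𝓝 (b 0)⁻¹) := by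
  have hsum : ∑' n, (0 : 𝕜) ^ n / b n = (b 0)⁻¹ := by
    rw [tsum_eq_single 0 fun n hn ↦ by simp [hn]]
    simp
  rw [← hsum]
  refine tendsto_tsum_of_dominated_convergence
    (summable_geometric_two.mul_left C) (fun n ↦ ?_) ?_
  · exact ((continuous_pow n).tendsto 0).div_const (b n)
  · filter_upwards [Metric.closedBall_mem_nhds (0 : 𝕜) (by norm_num : (0 : ℝ) < 1 / 2)]
      with w hw n
    rw [mem_closedBall_zero_iff] at hw
    refine (norm_pow_div_le hb w n).trans ?_
    gcongr
    exact (norm_nonneg _).trans (hb 0)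

end BoundedCoefficients

section QPochhammer

variable {q : ℂ}

lemma norm_mul_pow_lt_one (hq : ‖q‖ ≤ 1) {w : ℂ} (hw : ‖w‖ < 1) (k : ℕ) : ‖w * q ^ k‖ < 1 := by
  rw [norm_mul, norm_pow]
  exact (mul_le_of_le_one_right (norm_nonneg w) (pow_le_one₀ (norm_nonneg q) hq)).trans_lt hw

lemma one_sub_mul_pow_ne_zero (hq : ‖q‖ ≤ 1) {w : ℂ} (hw : ‖w‖ < 1) (k : ℕ) :
    1 - w * q ^ k ≠ 0 := by
  rw [sub_ne_zero]
  intro h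
  simpa [← h] using norm_mul_pow_lt_one hq hw k

@[simp]
lemma qPoch_zero (a q : ℂ) : qPoch a q 0 = 1 := Finset.prod_range_zero _

lemma qPoch_succ (a q : ℂ) (n : ℕ) : qPoch a q (n + 1) = qPoch a q n * (1 - a * q ^ n) :=
  Finset.prod_range_succ _ _

lemma summable_norm_neg_mul_pow (hq : ‖q‖ < 1) (a : ℂ) :
    Summable fun k : ℕ ↦ ‖-(a * q ^ k)‖ := by
  simpa [norm_pow] using (summable_geometric_of_lt_one (norm_nonneg q) hq).mul_left ‖a‖

lemma tendsto_qPoch (hq : ‖q‖ < 1) (a : ℂ) :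
    Tendsto (qPoch a q) atTop (𝓝 (∏' k : ℕ, (1 - a * q ^ k))) := by
  have hprod := (multipliable_one_add_of_summable (summable_norm_neg_mul_pow hq a)).hasProd
  simp only [← sub_eq_add_neg] at hprod
  exact hprod.tendsto_prod_nat

lemma tprod_one_sub_mul_pow_ne_zero (hq : ‖q‖ < 1) {a : ℂ} (ha : ‖a‖ < 1) :
    ∏' k : ℕ, (1 - a * q ^ k) ≠ 0 := by
  simpa [← sub_eq_add_neg] using tprod_one_add_ne_zero_of_summable
    (by simpa [← sub_eq_add_neg] using one_sub_mul_pow_ne_zero hq.le ha)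
    (summable_norm_neg_mul_pow hq a)

lemma exists_norm_inv_qPoch_le (hq : ‖q‖ < 1) {a : ℂ} (ha : ‖a‖ < 1) :
    ∃ C, ∀ n, ‖(qPoch a q n)⁻¹‖ ≤ C := by
  have hinv := (tendsto_qPoch hq a).inv₀ (tprod_one_sub_mul_pow_ne_zero hq ha)
  obtain ⟨C, hC⟩ := isBounded_iff_forall_norm_le.1 (Metric.isBounded_range_of_tendsto _ hinv)
  exact ⟨C, fun n ↦ hC _ ⟨n, rfl⟩⟩

end QPochhammer

def qExp (q w : ℂ) : ℂ := ∑' n : ℕ, w ^ n / qPoch q q n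

section QExp

variable {q : ℂ}

lemma summable_qExp (hq : ‖q‖ < 1) {w : ℂ} (hw : ‖w‖ < 1) :
    Summable fun n : ℕ ↦ w ^ n / qPoch q q n :=
  (exists_norm_inv_qPoch_le hq hq).elim fun _ hC ↦ summable_pow_div hC hw

lemma tendsto_qExp_nhds_zero (hq : ‖q‖ < 1) : Tendsto (qExp q) (𝓝 0) (𝓝 1) := by
  obtain ⟨C, hC⟩ := exists_norm_inv_qPoch_le hq hq
  have h := tendsto_tsum_pow_div_nhds_zero hC
  rwa [qPoch_zero, inv_one] at h

lemma pow_succ_div_qPoch_sub (hq : ‖q‖ < 1) (w : ℂ) (n : ℕ) :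
    w ^ (n + 1) / qPoch q q (n + 1) - (q * w) ^ (n + 1) / qPoch q q (n + 1)
      = w * (w ^ n / qPoch q q n) := by
  have hne : 1 - q * q ^ n ≠ 0 := one_sub_mul_pow_ne_zero hq.le hq n
  rw [div_sub_div_same, qPoch_succ, mul_pow,
    show w ^ (n + 1) - q ^ (n + 1) * w ^ (n + 1) = w * w ^ n * (1 - q * q ^ n) by ring,
    mul_div_mul_right _ _ hne, mul_div_assoc]

lemma qExp_mul_left (hq : ‖q‖ < 1) {w : ℂ} (hw : ‖w‖ < 1) :
    qExp q (q * w) = (1 - w) * qExp q w := by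
  have hqw : ‖q * w‖ < 1 := by simpa [mul_comm] using norm_mul_pow_lt_one hq.le hw 1
  have hdiff := (summable_qExp hq hw).sub (summable_qExp hq hqw)
  have hsub : qExp q w - qExp q (q * w) = w * qExp q w := by
    rw [qExp, qExp, ← (summable_qExp hq hw).tsum_sub (summable_qExp hq hqw),
      hdiff.tsum_eq_zero_add]
    simp only [pow_zero, sub_self, zero_add, pow_succ_div_qPoch_sub hq]
    exact tsum_mul_left
  linear_combination -hsub

lemma qExp_mul_qPoch (hq : ‖q‖ < 1) {z : ℂ} (hz : ‖z‖ < 1) (N : ℕ) :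
    qExp q z * qPoch z q N = qExp q (z * q ^ N) := by
  induction N with
  | zero => simp
  | succ N ih =>
    rw [qPoch_succ, ← mul_assoc, ih, mul_comm,
      ← qExp_mul_left hq (norm_mul_pow_lt_one hq.le hz N), pow_succ]
    ring_nf

end QExp

/-- For |q| < 1 and |z| < 1, e_q(z) = ∑_{n≥0} z^n/(q;q)_n = 1/(z;q)_∞. -/
theorem stmt1 (q z : ℂ) (hq : ‖q‖ < 1) (hz : ‖z‖ < 1) :
    ∑' n : ℕ, z ^ n / qPoch q q n = (∏' k : ℕ, (1 - z * q ^ k))⁻¹ := by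
  have hqN : Tendsto (fun N ↦ z * q ^ N) atTop (𝓝 0) := by
    simpa using (tendsto_pow_atTop_nhds_zero_of_norm_lt_one hq).const_mul z
  have hlim : Tendsto (fun N ↦ qExp q z * qPoch z q N) atTop (𝓝 1) := by
    simpa only [qExp_mul_qPoch hq hz, Function.comp_def] using
      (tendsto_qExp_nhds_zero hq).comp hqN
  have hprod : qExp q z * ∏' k : ℕ, (1 - z * q ^ k) = 1 :=
    tendsto_nhds_unique ((tendsto_qPoch hq z).const_mul _) hlim
  exact eq_inv_of_mul_eq_one_left hprod
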